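/- Let Z_1, …, Z_k be independent {0,1}-valued random variables on a probability space with P(Z_j = 1) = Y_j, where Y_j ∈ [0,1] for all j and Σ_{j=1}^k Y_j ≤ 1, and let v_1 ≥ v_2 ≥ ⋯ ≥ v_k ≥ 0 be reals. Define the random variable W by W = v_J where J is the smallest index j with Z_j = 1, and W = 0 if Z_j = 0 for all j. Then E[W] = Σ_{j=1}^k v_j Y_j ∏_{i=1}^{j-1} (1 − Y_i), and consequently E[W] ≥ (1 − 1/e) · Σ_{j=1}^k v_j Y_j. -/

import Mathlib

open MeasureTheory ProbabilityTheory Finset Real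

/-! On the event that `j` is the first index with `Z j = 1`, of probability
`Y j * ∏_{i<j} (1 - Y i)` by independence, `W` equals `v j`; this gives `E[W]`.
For the bound, the prefix sums of `Y j * ∏_{i<j} (1 - Y i)` telescope to
`1 - ∏ (1 - Y i) ≥ 1 - exp (-∑ Y i) ≥ (1 - 1/e) ∑ Y i`, the last step by convexity of `exp`
on `[-1, 0]`; summation by parts against the antitone nonnegative `v` turns these prefix
inequalities into the weighted one. -/

section Analytic

variable {ι : Type*}

lemma exp_neg_le_one_sub_mul {x : ℝ} (hx0 : 0 ≤ x) (hx1 : x ≤ 1) :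
    exp (-x) ≤ 1 - (1 - exp (-1)) * x := by
  have h := convexOn_exp.2 (Set.mem_univ 0) (Set.mem_univ (-1)) (sub_nonneg.2 hx1) hx0
    (sub_add_cancel 1 x)
  simp only [smul_eq_mul, mul_zero, mul_neg, mul_one, zero_add, exp_zero] at h
  linarith

lemma prod_one_sub_le_exp_neg_sum (s : Finset ι) {Y : ι → ℝ} (hY : ∀ i ∈ s, Y i ≤ 1) :
    ∏ i ∈ s, (1 - Y i) ≤ exp (-∑ i ∈ s, Y i) := by
  rw [← sum_neg_distrib, exp_sum]
  exact prod_le_prod (fun i hi => sub_nonneg.2 (hY i hi)) fun i _ => one_sub_le_exp_neg _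

lemma one_sub_exp_neg_one_mul_sum_le_one_sub_prod (s : Finset ι) {Y : ι → ℝ}
    (hY0 : ∀ i ∈ s, 0 ≤ Y i) (hY1 : ∀ i ∈ s, Y i ≤ 1) (hs : ∑ i ∈ s, Y i ≤ 1) :
    (1 - exp (-1)) * ∑ i ∈ s, Y i ≤ 1 - ∏ i ∈ s, (1 - Y i) := by
  linarith [prod_one_sub_le_exp_neg_sum s hY1, exp_neg_le_one_sub_mul (sum_nonneg hY0) hs]

variable [LinearOrder ι]

lemma mul_sum_le_sum_mul_of_antitone {v d : ι → ℝ} (hv : Antitone v)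
    (hd : ∀ t : Finset ι, IsLowerSet (t : Set ι) → 0 ≤ ∑ i ∈ t, d i)
    {s : Finset ι} (hs : IsLowerSet (s : Set ι)) {x : ι} (hx : ∀ i ∈ s, i ≤ x) :
    v x * ∑ i ∈ s, d i ≤ ∑ i ∈ s, v i * d i := by
  induction s using Finset.induction_on_max generalizing x with
  | empty => simp
  | insert a t hlt ih =>
    have ha : a ∉ t := fun h => lt_irrefl a (hlt a h)
    have ht : IsLowerSet (t : Set ι) := fun j i hij hj =>
      (mem_insert.1 (hs hij (mem_insert_of_mem hj))).resolve_left
        (hij.trans_lt (hlt j hj)).ne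
    have hsum := hd _ hs
    rw [sum_insert ha] at hsum
    rw [sum_insert ha, sum_insert ha]
    calc v x * (d a + ∑ i ∈ t, d i) ≤ v a * (d a + ∑ i ∈ t, d i) :=
          mul_le_mul_of_nonneg_right (hv (hx a (mem_insert_self a t))) hsum
      _ = v a * d a + v a * ∑ i ∈ t, d i := mul_add _ _ _
      _ ≤ v a * d a + ∑ i ∈ t, v i * d i := by
          gcongr
          exact ih ht fun i hi => (hlt i hi).le

variable [Fintype ι]

lemma sum_mul_nonneg_of_antitone {v d : ι → ℝ} (hv : Antitone v) (hv0 : ∀ i, 0 ≤ v i)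
    (hd : ∀ t : Finset ι, IsLowerSet (t : Set ι) → 0 ≤ ∑ i ∈ t, d i) :
    0 ≤ ∑ i, v i * d i := by
  cases isEmpty_or_nonempty ι
  · simp
  obtain ⟨x, hx⟩ := Finite.exists_max (id : ι → ι)
  have huniv : IsLowerSet ((univ : Finset ι) : Set ι) := by
    rw [coe_univ]; exact isLowerSet_univ
  exact (mul_nonneg (hv0 x) (hd univ huniv)).trans
    (mul_sum_le_sum_mul_of_antitone hv hd huniv fun i _ => hx i)

lemma sum_mul_prod_one_sub_of_isLowerSet {R : Type*} [CommRing R] (Y : ι → R)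
    {t : Finset ι} (ht : IsLowerSet (t : Set ι)) :
    ∑ j ∈ t, Y j * ∏ i ∈ univ.filter (· < j), (1 - Y i) = 1 - ∏ i ∈ t, (1 - Y i) := by
  rw [prod_one_sub_ordered, sub_sub_cancel]
  refine sum_congr rfl fun j hj => ?_
  congr 2
  ext i
  simpa using fun hij : i < j => ht hij.le hj

theorem one_sub_exp_neg_one_mul_sum_le_sum_mul_prod {v Y : ι → ℝ} (hv : Antitone v)
    (hv0 : ∀ i, 0 ≤ v i) (hY0 : ∀ i, 0 ≤ Y i) (hY1 : ∀ i, Y i ≤ 1) (hYsum : ∑ i, Y i ≤ 1) :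
    (1 - exp (-1)) * ∑ j, v j * Y j ≤
      ∑ j, v j * Y j * ∏ i ∈ univ.filter (· < j), (1 - Y i) := by
  set c := 1 - exp (-1)
  have key := sum_mul_nonneg_of_antitone hv hv0
    (d := fun j => Y j * ∏ i ∈ univ.filter (· < j), (1 - Y i) - c * Y j) fun t ht => by
      rw [sum_sub_distrib, sum_mul_prod_one_sub_of_isLowerSet Y ht, ← mul_sum]
      linarith [one_sub_exp_neg_one_mul_sum_le_one_sub_prod t (fun i _ => hY0 i)
        (fun i _ => hY1 i) ((sum_le_univ_sum_of_nonneg hY0).trans hYsum)]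
  simp only [mul_sub, sum_sub_distrib, sub_nonneg] at key
  rw [mul_sum]
  calc ∑ j, c * (v j * Y j) = ∑ j, v j * (c * Y j) := sum_congr rfl fun j _ => by ring
    _ ≤ ∑ j, v j * (Y j * ∏ i ∈ univ.filter (· < j), (1 - Y i)) := key
    _ = _ := sum_congr rfl fun j _ => (mul_assoc _ _ _).symm

end Analytic

section FirstHit

variable {Ω ι β : Type*} [LinearOrder ι]

def firstHit (Z : ι → Ω → β) (s : Set β) (j : ι) : Set Ω :=
  {ω | Z j ω ∈ s ∧ ∀ i < j, Z i ω ∉ s}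

lemma eq_of_mem_firstHit {Z : ι → Ω → β} {s : Set β} {i j : ι} {ω : Ω}
    (hi : ω ∈ firstHit Z s i) (hj : ω ∈ firstHit Z s j) : i = j := by
  by_contra hne
  rcases lt_or_gt_of_ne hne with h | h
  exacts [hj.2 i h hi.1, hi.2 j h hj.1]

variable [Fintype ι]

lemma firstHit_eq_inter (Z : ι → Ω → β) (s : Set β) (j : ι) :
    firstHit Z s j = Z j ⁻¹' s ∩ ⋂ i ∈ univ.filter (· < j), Z i ⁻¹' sᶜ := by
  ext ω
  simp [firstHit]

lemma dite_min'_eq_sum_indicator_firstHit {M : Type*} [AddCommMonoid M] (Z : ι → Ω → β)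
    (s : Set β) [DecidablePred (· ∈ s)] (v : ι → M) (ω : Ω) :
    (if h : (univ.filter fun j => Z j ω ∈ s).Nonempty
      then v ((univ.filter fun j => Z j ω ∈ s).min' h) else 0) =
      ∑ j, (firstHit Z s j).indicator (fun _ => v j) ω := by
  split_ifs with h
  · set m := (univ.filter fun j => Z j ω ∈ s).min' h
    have hm : ω ∈ firstHit Z s m := ⟨(mem_filter.1 (min'_mem _ h)).2, fun i hi hZi =>
      (min'_le _ i (mem_filter.2 ⟨mem_univ i, hZi⟩)).not_gt hi⟩
    rw [sum_eq_single m (fun j _ hj => Set.indicator_of_notMem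
      (fun hj' => hj (eq_of_mem_firstHit hj' hm)) _) (fun h => (h (mem_univ m)).elim),
      Set.indicator_of_mem hm]
  · refine (sum_eq_zero fun j _ => Set.indicator_of_notMem (fun hj => h ?_) _).symm
    exact ⟨j, mem_filter.2 ⟨mem_univ j, hj.1⟩⟩

variable [MeasurableSpace Ω] [MeasurableSpace β]

lemma measurableSet_firstHit {Z : ι → Ω → β} (hZ : ∀ i, Measurable (Z i)) {s : Set β}
    (hs : MeasurableSet s) (j : ι) : MeasurableSet (firstHit Z s j) := by
  rw [firstHit_eq_inter]
  exact (hZ j hs).inter (Finset.measurableSet_biInter _ fun i _ => hZ i hs.compl)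

lemma measureReal_firstHit {P : Measure Ω} [IsProbabilityMeasure P] {Z : ι → Ω → β}
    (hZ : ∀ i, Measurable (Z i)) (hind : iIndepFun Z P) {s : Set β} (hs : MeasurableSet s)
    (j : ι) :
    P.real (firstHit Z s j) =
      P.real (Z j ⁻¹' s) * ∏ i ∈ univ.filter (· < j), (1 - P.real (Z i ⁻¹' s)) := by
  classical
  let sets : ι → Set β := fun i => if i = j then s else sᶜ
  have hsets : ∀ i, MeasurableSet (sets i) := fun i => by
    by_cases h : i = j <;> simp [sets, h, hs, hs.compl]
  have hj : j ∉ univ.filter (· < j) := by simp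
  have hprod := hind.measure_inter_preimage_eq_mul (insert j (univ.filter (· < j)))
    fun i _ => hsets i
  have hlt : ∀ i ∈ univ.filter (· < j), Z i ⁻¹' sets i = Z i ⁻¹' sᶜ := fun i hi => by
    rw [show sets i = sᶜ from if_neg (mem_filter.1 hi).2.ne]
  rw [set_biInter_insert, prod_insert hj, Set.iInter₂_congr hlt, prod_congr rfl fun i hi =>
    congrArg P (hlt i hi), show sets j = s from if_pos rfl] at hprod
  rw [measureReal_def, firstHit_eq_inter, hprod, ENNReal.toReal_mul, ENNReal.toReal_prod]
  refine congrArg _ (prod_congr rfl fun i _ => ?_)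
  rw [Set.preimage_compl, ← measureReal_def, probReal_compl_eq_one_sub (hZ i hs)]

theorem integral_dite_min'_eq_sum {P : Measure Ω} [IsProbabilityMeasure P] {Z : ι → Ω → β}
    (hZ : ∀ i, Measurable (Z i)) (hind : iIndepFun Z P) {s : Set β} [DecidablePred (· ∈ s)]
    (hs : MeasurableSet s) (v : ι → ℝ) :
    ∫ ω, (if h : (univ.filter fun j => Z j ω ∈ s).Nonempty
      then v ((univ.filter fun j => Z j ω ∈ s).min' h) else 0) ∂P =
      ∑ j, v j * P.real (Z j ⁻¹' s) * ∏ i ∈ univ.filter (· < j), (1 - P.real (Z i ⁻¹' s)) := by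
  simp_rw [dite_min'_eq_sum_indicator_firstHit]
  rw [integral_finsetSum _ fun j _ =>
    (integrable_const (v j)).indicator (measurableSet_firstHit hZ hs j)]
  refine sum_congr rfl fun j _ => ?_
  rw [integral_indicator_const _ (measurableSet_firstHit hZ hs j),
    measureReal_firstHit hZ hind hs, smul_eq_mul]
  ring

end FirstHit

theorem stmt2_general {Ω : Type*} [MeasurableSpace Ω] (P : Measure Ω) [IsProbabilityMeasure P]
    (k : ℕ)
    (Z : Fin k → Ω → ℝ) (Y v : Fin k → ℝ)
    (hZmeas : ∀ j, Measurable (Z j))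
    (hindep : iIndepFun Z P)
    (hprob : ∀ j, P {ω | Z j ω = 1} = ENNReal.ofReal (Y j))
    (hY : ∀ j, 0 ≤ Y j ∧ Y j ≤ 1)
    (hYsum : ∑ j, Y j ≤ 1)
    (hv0 : ∀ j, 0 ≤ v j)
    (hvmono : Antitone v)
    (W : Ω → ℝ)
    (hW : ∀ ω, W ω =
      if h : (Finset.univ.filter (fun j => Z j ω = 1)).Nonempty
      then v ((Finset.univ.filter (fun j => Z j ω = 1)).min' h)
      else 0) :
    (∫ ω, W ω ∂P) =
        ∑ j, v j * Y j * ∏ i ∈ Finset.univ.filter (· < j), (1 - Y i) ∧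
      (1 - 1 / Real.exp 1) * ∑ j, v j * Y j ≤ ∫ ω, W ω ∂P := by
  have hPY : ∀ j, P.real (Z j ⁻¹' {1}) = Y j := fun j =>
    (congrArg ENNReal.toReal (hprob j)).trans (ENNReal.toReal_ofReal (hY j).1)
  have hEW : ∫ ω, W ω ∂P = ∑ j, v j * Y j * ∏ i ∈ univ.filter (· < j), (1 - Y i) := by
    simp_rw [hW, ← hPY]
    exact integral_dite_min'_eq_sum hZmeas hindep (measurableSet_singleton 1) v
  refine ⟨hEW, ?_⟩
  rw [hEW, one_div, ← exp_neg]
  exact one_sub_exp_neg_one_mul_sum_le_sum_mul_prod hvmono hv0 (fun j => (hY j).1)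
    (fun j => (hY j).2) hYsum

/-- Per-passenger guarantee of the rounding/re-assignment step: if line `j` independently
receives the passenger with probability `Y j`, and the passenger is re-assigned to the line of
largest value among the lines that received her (values sorted in decreasing order), then the
expected contributed value `E[W]` equals `∑ v j Y j ∏_{i<j} (1 - Y i)`, and is at least
`(1 - 1/e)` times the fractional value `∑ v j Y j`. -/
theorem stmt2 {Ω : Type*} [MeasurableSpace Ω] (P : Measure Ω) [IsProbabilityMeasure P]
    (k : ℕ) (hk : 1 ≤ k)
    (Z : Fin k → Ω → ℝ) (Y v : Fin k → ℝ)
    (hZmeas : ∀ j, Measurable (Z j))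
    (hZ01 : ∀ j ω, Z j ω = 0 ∨ Z j ω = 1)
    (hindep : iIndepFun Z P)
    (hprob : ∀ j, P {ω | Z j ω = 1} = ENNReal.ofReal (Y j))
    (hY : ∀ j, 0 ≤ Y j ∧ Y j ≤ 1)
    (hYsum : ∑ j, Y j ≤ 1)
    (hv0 : ∀ j, 0 ≤ v j)
    (hvmono : Antitone v)
    (W : Ω → ℝ)
    (hW : ∀ ω, W ω =
      if h : (Finset.univ.filter (fun j => Z j ω = 1)).Nonempty
      then v ((Finset.univ.filter (fun j => Z j ω = 1)).min' h)
      else 0) :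
    (∫ ω, W ω ∂P) =
        ∑ j, v j * Y j * ∏ i ∈ Finset.univ.filter (· < j), (1 - Y i) ∧
      (1 - 1 / Real.exp 1) * ∑ j, v j * Y j ≤ ∫ ω, W ω ∂P :=
  stmt2_general P k Z Y v hZmeas hindep hprob hY hYsum hv0 hvmono W hW
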